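/- For all real t with 0 ≤ t < 1, F2(t) = ∑_{n=1}^∞ 4(n+1)t^{2n}/((2n-1)(2n+1)(2n+3)), where F2(t) = ((3t^4 - 2t^2 - 1)/(8t^3))·ln((1+t)/(1-t)) + 1/(4t^2) + 7/12 for 0<t<1 and F2(0)=0. -/

import Mathlib

noncomputable def F2 (t : ℝ) : ℝ :=
  if t = 0 then 0 else
    ((3*t^4 - 2*t^2 - 1)/(8*t^3)) * Real.log ((1+t)/(1-t)) + 1/(4*t^2) + 7/12

/-! The summand is a fixed linear combination of three consecutive terms `t^(2k+1)/(2k+1)`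
of the series of `artanh t = log ((1 + t) / (1 - t)) / 2`, with coefficients `3t/4`, `-1/(2t)`
and `-1/(4t³)` from the partial fraction decomposition of `4(n+2)/((2n+1)(2n+3)(2n+5))`.
Summing the three shifted artanh series gives the closed form. -/

open Real

noncomputable def artanhTerm (t : ℝ) (n : ℕ) : ℝ := t ^ (2 * n + 1) / (2 * n + 1)

theorem hasSum_artanhTerm {t : ℝ} (ht : |t| < 1) :
    HasSum (artanhTerm t) (log ((1 + t) / (1 - t)) / 2) := by
  have hpos : 0 < 1 - t ∧ 0 < 1 + t := by constructor <;> linarith [abs_lt.mp ht]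
  rw [log_div hpos.2.ne' hpos.1.ne']
  convert (hasSum_log_sub_log_of_abs_lt_one ht).div_const 2 using 2 with n
  · rfl
  rw [artanhTerm]
  field_simp

theorem hasSum_artanhTerm_add_one {t : ℝ} (ht : |t| < 1) :
    HasSum (fun n ↦ artanhTerm t (n + 1)) (log ((1 + t) / (1 - t)) / 2 - t) := by
  simpa [artanhTerm] using (hasSum_nat_add_iff' 1).mpr (hasSum_artanhTerm ht)

theorem hasSum_artanhTerm_add_two {t : ℝ} (ht : |t| < 1) :
    HasSum (fun n ↦ artanhTerm t (n + 2)) (log ((1 + t) / (1 - t)) / 2 - t - t ^ 3 / 3) := by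
  convert (hasSum_nat_add_iff' 2).mpr (hasSum_artanhTerm ht) using 1
  · rfl
  norm_num [artanhTerm, Finset.sum_range_succ]
  ring

theorem summand_eq_artanhTerm_combination {t : ℝ} (ht : t ≠ 0) (n : ℕ) :
    4 * ((n : ℝ) + 2) * t ^ (2 * (n + 1))
        / ((2 * (n : ℝ) + 1) * (2 * (n : ℝ) + 3) * (2 * (n : ℝ) + 5))
      = 3 * t / 4 * artanhTerm t n - 1 / (2 * t) * artanhTerm t (n + 1)
          - 1 / (4 * t ^ 3) * artanhTerm t (n + 2) := by
  simp only [artanhTerm]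
  push_cast
  rw [show 2 * (n + 1) + 1 = 2 * n + 1 + 2 by ring, show 2 * (n + 2) + 1 = 2 * n + 1 + 4 by ring,
    show 2 * (n + 1) = 2 * n + 2 by ring]
  field_simp
  ring

theorem stmt_8 (t : ℝ) (ht0 : 0 ≤ t) (ht1 : t < 1) :
    F2 t = ∑' n : ℕ,
      4*((n:ℝ)+2) * t^(2*(n+1)) / ((2*(n:ℝ)+1)*(2*(n:ℝ)+3)*(2*(n:ℝ)+5)) := by
  rcases ht0.eq_or_lt with rfl | hpos
  · simp [F2]
  have ht : |t| < 1 := by rwa [abs_of_pos hpos]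
  have hsum := (((hasSum_artanhTerm ht).mul_left (3 * t / 4)).sub
    ((hasSum_artanhTerm_add_one ht).mul_left (1 / (2 * t)))).sub
    ((hasSum_artanhTerm_add_two ht).mul_left (1 / (4 * t ^ 3)))
  simp_rw [← summand_eq_artanhTerm_combination hpos.ne'] at hsum
  rw [hsum.tsum_eq, F2, if_neg hpos.ne']
  field_simp
  ring
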